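/- Let Φ₁, Φ₂ be matrices and t₁, t₂ nonzero vectors. Vectors w₁, w₂ satisfy (Φ₁ ⊗ Φ₂)(w₁ ⊗ w₂) = t₁ ⊗ t₂ if and only if there exists a nonzero scalar α such that Φ₁ w₁ = α t₁ and Φ₂ w₂ = α⁻¹ t₂. -/

import Mathlib

open Matrix Kronecker

theorem Matrix.kronecker_mulVec_kronecker {R l m n p : Type*} [CommSemiring R]
    [Fintype m] [Fintype p] (A : Matrix l m R) (B : Matrix n p R) (x : m → R) (y : p → R) :
    (A ⊗ₖ B) *ᵥ (fun q => x q.1 * y q.2) = fun q => (A *ᵥ x) q.1 * (B *ᵥ y) q.2 := by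
  funext q
  simp only [mulVec, dotProduct, kroneckerMap_apply, Finset.sum_mul_sum, Fintype.sum_prod_type]
  exact Finset.sum_congr rfl fun a _ => Finset.sum_congr rfl fun b _ => by ring

theorem outerProduct_eq_outerProduct_iff {K ι κ : Type*} [Field K] {u t₁ : ι → K} {v t₂ : κ → K}
    (ht₁ : t₁ ≠ 0) (ht₂ : t₂ ≠ 0) :
    ((fun p : ι × κ => u p.1 * v p.2) = fun p => t₁ p.1 * t₂ p.2) ↔
      ∃ α : K, α ≠ 0 ∧ u = α • t₁ ∧ v = α⁻¹ • t₂ := by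
  constructor
  · intro h
    have huv (i : ι) (j : κ) : u i * v j = t₁ i * t₂ j := congrFun h (i, j)
    obtain ⟨i, hi⟩ := Function.ne_iff.mp ht₁
    obtain ⟨j, hj⟩ := Function.ne_iff.mp ht₂
    have hij : u i * v j ≠ 0 := by rw [huv]; exact mul_ne_zero hi hj
    have hui : u i ≠ 0 := left_ne_zero_of_mul hij
    have hvj : v j ≠ 0 := right_ne_zero_of_mul hij
    refine ⟨t₂ j / v j, div_ne_zero hj hvj, funext fun k => ?_, funext fun l => ?_⟩
    · simp only [Pi.smul_apply, smul_eq_mul]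
      field_simp
      linear_combination huv k j
    · have hα : (t₂ j / v j)⁻¹ = t₁ i / u i := by
        rw [inv_div, div_eq_div_iff hj hui]
        linear_combination huv i j
      simp only [Pi.smul_apply, smul_eq_mul, hα]
      field_simp
      linear_combination huv i l
  · rintro ⟨α, hα, rfl, rfl⟩
    funext p
    simp only [Pi.smul_apply, smul_eq_mul]
    field_simp

/-- `(Φ₁ ⊗ Φ₂)(w₁ ⊗ w₂) = t₁ ⊗ t₂` (with `t₁, t₂ ≠ 0`) holds iff there is a nonzero scalar `α`
with `Φ₁ w₁ = α t₁` and `Φ₂ w₂ = α⁻¹ t₂`. -/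
theorem stmt2 {m₁ n₁ m₂ n₂ : ℕ}
    (Φ₁ : Matrix (Fin m₁) (Fin n₁) ℂ) (Φ₂ : Matrix (Fin m₂) (Fin n₂) ℂ)
    (w₁ : Fin n₁ → ℂ) (w₂ : Fin n₂ → ℂ) (t₁ : Fin m₁ → ℂ) (t₂ : Fin m₂ → ℂ)
    (ht₁ : t₁ ≠ 0) (ht₂ : t₂ ≠ 0) :
    ((Φ₁ ⊗ₖ Φ₂).mulVec (fun p => w₁ p.1 * w₂ p.2) = fun p => t₁ p.1 * t₂ p.2) ↔
      ∃ α : ℂ, α ≠ 0 ∧ Φ₁.mulVec w₁ = α • t₁ ∧ Φ₂.mulVec w₂ = α⁻¹ • t₂ := by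
  rw [kronecker_mulVec_kronecker]
  exact outerProduct_eq_outerProduct_iff ht₁ ht₂
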